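/- arXiv:1708.03831 — 8 statements merged into one kernel-verified Lean document; each statement's English description precedes it below -/
import Mathlib

section
/- If R0 = βN(μ/(d+r_a) + α(1-μ)/(d+r_s)) ≤ 1, then the only solution (S, I_a, I_s) with S, I_a, I_s ≥ 0 of the equilibrium equations (d+σ)(N-S) - βS(I_a+αI_s) - σ(I_a+I_s) = 0, μβS(I_a+αI_s) - (d+r_a)I_a = 0, (1-μ)βS(I_a+αI_s) - (d+r_s)I_s = 0 is (N, 0, 0). -/
/-- If R0 ≤ 1, the only nonnegative equilibrium of the autonomous
SIRS system with asymptomatic infection is the disease-free equilibrium (N,0,0). -/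
theorem disease_free_unique_equilibrium
    (d σ β N ra rs α μ : ℝ)
    (hd : 0 < d) (hσ : 0 < σ) (hβ : 0 < β) (hN : 0 < N)
    (hra : 0 < ra) (hrs : 0 < rs)
    (hα0 : 0 ≤ α) (hα1 : α ≤ 1) (hμ0 : 0 ≤ μ) (hμ1 : μ ≤ 1)
    (hR0 : β * N * (μ / (d + ra) + α * (1 - μ) / (d + rs)) ≤ 1) :
    ∀ S Ia Is : ℝ, 0 ≤ S → 0 ≤ Ia → 0 ≤ Is →
      (d + σ) * (N - S) - β * S * (Ia + α * Is) - σ * (Ia + Is) = 0 →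
      μ * β * S * (Ia + α * Is) - (d + ra) * Ia = 0 →
      (1 - μ) * β * S * (Ia + α * Is) - (d + rs) * Is = 0 →
      S = N ∧ Ia = 0 ∧ Is = 0 := by
  intro S Ia Is hS hIa hIs h1 h2 h3
  have hdra : (0:ℝ) < d + ra := by linarith
  have hdrs : (0:ℝ) < d + rs := by linarith
  have hΛ0 : 0 ≤ Ia + α * Is := by positivity
  rcases hΛ0.lt_or_eq with hpos | hzero
  · exfalso
    -- Ia + Is > 0
    have hsum : 0 < Ia + Is := by nlinarith
    -- S < N from h1
    have hSN : S < N := by nlinarith [mul_nonneg (mul_nonneg hβ.le hS) hΛ0]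
    have hKeq : (β * S * (μ / (d + ra) + α * (1 - μ) / (d + rs)) - 1)
        * (Ia + α * Is) = 0 := by
      field_simp
      linear_combination (d + rs) * h2 + α * (d + ra) * h3
    have hβSK : β * S * (μ / (d + ra) + α * (1 - μ) / (d + rs)) = 1 := by
      rcases mul_eq_zero.mp hKeq with h | h
      · linarith
      · linarith
    have hSpos : 0 < S := by
      rcases hS.lt_or_eq with h | h
      · exact h
      · rw [← h] at hβSK; simp at hβSK
    have hKpos : 0 < μ / (d + ra) + α * (1 - μ) / (d + rs) := by
      by_contra hK
      push_neg at hK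
      nlinarith
    nlinarith
  · have hz : Ia + α * Is = 0 := hzero.symm
    have hIa0 : Ia = 0 := by
      have h4 : (d + ra) * Ia = 0 := by rw [hz] at h2; linarith
      rcases mul_eq_zero.mp h4 with h | h
      · linarith
      · exact h
    have hIs0 : Is = 0 := by
      have h4 : (d + rs) * Is = 0 := by rw [hz] at h3; linarith
      rcases mul_eq_zero.mp h4 with h | h
      · linarith
      · exact h
    subst hIa0 hIs0
    refine ⟨?_, rfl, rfl⟩
    have h4 : (d + σ) * (N - S) = 0 := by rw [hzero.symm] at h1; nlinarith
    rcases mul_eq_zero.mp h4 with h | h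
    · linarith
    · linarith
end

section
/- If R0 = βN(μ/(d+r_a) + α(1-μ)/(d+r_s)) > 1 and 0 < μ < 1, then the point (S*, I_a*, I_s*) with S* = N/R0, I_a* = μ(d+σ)(d+r_s)N(1 - 1/R0)/((d+r_a)(d+r_s) + σ(d+μr_s) + σr_a(1-μ)), I_s* = ((1-μ)(d+r_a))/(μ(d+r_s)) · I_a* satisfies the equilibrium equations (d+σ)(N-S*) - βS*(I_a*+αI_s*) - σ(I_a*+I_s*) = 0, μβS*(I_a*+αI_s*) - (d+r_a)I_a* = 0, (1-μ)βS*(I_a*+αI_s*) - (d+r_s)I_s* = 0, and S*, I_a*, I_s* > 0 with S* + I_a* + I_s* < N. -/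
/-!
At `S* = N / R0` one has `β S* (μ / (d + r_a) + α (1 - μ) / (d + r_s)) = 1`. Write the
infected classes as `I_a* = μ (d + r_s) k` and `I_s* = (1 - μ) (d + r_a) k`; then the force
of infection `β S* (I_a* + α I_s*)` equals `(d + r_a) (d + r_s) k`, which settles both
infected equations. With `c = μ (d + r_s) + (1 - μ) (d + r_a)` the denominator of `I_a*` is
`(d + r_a) (d + r_s) + σ c`, so the susceptible equation is the definition of `k`, and
`I_a* + I_s* = c k < N - S*` because `d c < (d + r_a) (d + r_s)`.
-/

lemma mul_convex_combination_lt_mul {d A B μ : ℝ} (hd : 0 ≤ d) (hdA : d < A) (hdB : d < B)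
    (hμ0 : 0 < μ) (hμ1 : μ < 1) :
    d * (μ * B + (1 - μ) * A) < A * B := by
  nlinarith [mul_pos hμ0 (mul_pos (sub_pos.2 hdA) (hd.trans_lt hdB)),
    mul_pos (sub_pos.2 hμ1) (mul_pos (sub_pos.2 hdB) (hd.trans_lt hdA))]

lemma infection_force_eq {β S α μ A B k : ℝ} (hA : A ≠ 0) (hB : B ≠ 0)
    (hS : β * S * (μ / A + α * (1 - μ) / B) = 1) :
    β * S * (μ * B * k + α * ((1 - μ) * A * k)) = A * B * k := by
  calc β * S * (μ * B * k + α * ((1 - μ) * A * k))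
      = β * S * (μ / A + α * (1 - μ) / B) * (A * B * k) := by field_simp
    _ = A * B * k := by rw [hS, one_mul]

lemma endemic_balance {d σ β α μ A B N S k : ℝ} (hA : A ≠ 0) (hB : B ≠ 0)
    (hS : β * S * (μ / A + α * (1 - μ) / B) = 1)
    (hk : k * (A * B + σ * (μ * B + (1 - μ) * A)) = (d + σ) * (N - S)) :
    (d + σ) * (N - S) - β * S * (μ * B * k + α * ((1 - μ) * A * k))
        - σ * (μ * B * k + (1 - μ) * A * k) = 0 ∧
    μ * β * S * (μ * B * k + α * ((1 - μ) * A * k)) - A * (μ * B * k) = 0 ∧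
    (1 - μ) * β * S * (μ * B * k + α * ((1 - μ) * A * k)) - B * ((1 - μ) * A * k) = 0 := by
  have hforce := infection_force_eq (k := k) hA hB hS
  exact ⟨by linear_combination -hforce - hk, by linear_combination μ * hforce,
    by linear_combination (1 - μ) * hforce⟩

lemma endemic_total_lt {d σ μ A B N S k : ℝ} (hd : 0 < d) (hσ : 0 ≤ σ) (hdA : d < A)
    (hdB : d < B) (hμ0 : 0 < μ) (hμ1 : μ < 1) (hk0 : 0 < k)
    (hk : k * (A * B + σ * (μ * B + (1 - μ) * A)) = (d + σ) * (N - S)) :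
    S + μ * B * k + (1 - μ) * A * k < N := by
  have hlt := mul_lt_mul_of_pos_left (mul_convex_combination_lt_mul hd.le hdA hdB hμ0 hμ1) hk0
  have hdσ : 0 < d + σ := by linarith
  nlinarith

theorem endemic_equilibrium_exists_general
    (d σ β N ra rs α μ : ℝ)
    (hd : 0 < d) (hσ : 0 < σ) (hN : 0 < N)
    (hra : 0 < ra) (hrs : 0 < rs)
    (hμ0 : 0 < μ) (hμ1 : μ < 1)
    (hR0 : 1 < β * N * (μ / (d + ra) + α * (1 - μ) / (d + rs))) :
    let R0 : ℝ := β * N * (μ / (d + ra) + α * (1 - μ) / (d + rs))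
    let Sstar : ℝ := N / R0
    let Iastar : ℝ := μ * (d + σ) * (d + rs) * N * (1 - 1 / R0) /
      ((d + ra) * (d + rs) + σ * (d + μ * rs) + σ * ra * (1 - μ))
    let Isstar : ℝ := (1 - μ) * (d + ra) / (μ * (d + rs)) * Iastar
    (d + σ) * (N - Sstar) - β * Sstar * (Iastar + α * Isstar)
        - σ * (Iastar + Isstar) = 0 ∧
    μ * β * Sstar * (Iastar + α * Isstar) - (d + ra) * Iastar = 0 ∧
    (1 - μ) * β * Sstar * (Iastar + α * Isstar) - (d + rs) * Isstar = 0 ∧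
    0 < Sstar ∧ 0 < Iastar ∧ 0 < Isstar ∧ Sstar + Iastar + Isstar < N := by
  intro R0 Sstar Iastar Isstar
  have hR0pos : 0 < R0 := one_pos.trans hR0
  have hD : (d + ra) * (d + rs) + σ * (d + μ * rs) + σ * ra * (1 - μ)
      = (d + ra) * (d + rs) + σ * (μ * (d + rs) + (1 - μ) * (d + ra)) := by ring
  have hμ1' : 0 < 1 - μ := sub_pos.2 hμ1
  have hDpos : 0 < (d + ra) * (d + rs) + σ * (μ * (d + rs) + (1 - μ) * (d + ra)) := by
    positivity
  set k :=
    (d + σ) * (N - Sstar) / ((d + ra) * (d + rs) + σ * (μ * (d + rs) + (1 - μ) * (d + ra)))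
  have hk : k * ((d + ra) * (d + rs) + σ * (μ * (d + rs) + (1 - μ) * (d + ra)))
      = (d + σ) * (N - Sstar) := div_mul_cancel₀ _ hDpos.ne'
  have hk0 : 0 < k := div_pos (mul_pos (by linarith) (sub_pos.2 (div_lt_self hN hR0))) hDpos
  have hIa : Iastar = μ * (d + rs) * k := by
    simp only [Iastar, k, Sstar, hD]
    ring
  have hIs : Isstar = (1 - μ) * (d + ra) * k := by
    simp only [Isstar, hIa]
    field_simp
  have hS : β * Sstar * (μ / (d + ra) + α * (1 - μ) / (d + rs)) = 1 := by
    convert div_self hR0pos.ne' using 1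
    simp only [Sstar, R0]
    ring
  rw [hIa, hIs]
  obtain ⟨hSus, hIa', hIs'⟩ := endemic_balance (by positivity) (by positivity) hS hk
  exact ⟨hSus, hIa', hIs', div_pos hN hR0pos, by positivity, by positivity,
    endemic_total_lt hd hσ.le (lt_add_of_pos_right d hra) (lt_add_of_pos_right d hrs)
      hμ0 hμ1 hk0 hk⟩

/-- When R0 > 1 and 0 < μ < 1, the endemic point (S*, I_a*, I_s*)
satisfies the equilibrium equations and lies in the interior of D₀. -/
theorem endemic_equilibrium_exists
    (d σ β N ra rs α μ : ℝ)
    (hd : 0 < d) (hσ : 0 < σ) (hβ : 0 < β) (hN : 0 < N)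
    (hra : 0 < ra) (hrs : 0 < rs)
    (hα0 : 0 < α) (hα1 : α ≤ 1) (hμ0 : 0 < μ) (hμ1 : μ < 1)
    (hR0 : 1 < β * N * (μ / (d + ra) + α * (1 - μ) / (d + rs))) :
    let R0 : ℝ := β * N * (μ / (d + ra) + α * (1 - μ) / (d + rs))
    let Sstar : ℝ := N / R0
    let Iastar : ℝ := μ * (d + σ) * (d + rs) * N * (1 - 1 / R0) /
      ((d + ra) * (d + rs) + σ * (d + μ * rs) + σ * ra * (1 - μ))
    let Isstar : ℝ := (1 - μ) * (d + ra) / (μ * (d + rs)) * Iastar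
    (d + σ) * (N - Sstar) - β * Sstar * (Iastar + α * Isstar)
        - σ * (Iastar + Isstar) = 0 ∧
    μ * β * Sstar * (Iastar + α * Isstar) - (d + ra) * Iastar = 0 ∧
    (1 - μ) * β * Sstar * (Iastar + α * Isstar) - (d + rs) * Isstar = 0 ∧
    0 < Sstar ∧ 0 < Iastar ∧ 0 < Isstar ∧ Sstar + Iastar + Isstar < N :=
  endemic_equilibrium_exists_general d σ β N ra rs α μ hd hσ hN hra hrs hμ0 hμ1 hR0
end

section
/- The characteristic polynomial of the Jacobian matrix of the autonomous SIRS system at the disease-free equilibrium (N,0,0) factors as (λ + d + σ)(λ² - a₁λ + a₀), where a₀ = (d+r_a)(d+r_s)(1 - R0) and a₁ = (μβN - (d+r_a)) + (α(1-μ)βN - (d+r_s)), with R0 = βN(μ/(d+r_a) + α(1-μ)/(d+r_s)). -/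
/-!
At `(N, 0, 0)` only the linear part of the vector field and the linearisation of the incidence
term `β S (I_a + α I_s)` at `S = N` survive, so the Jacobian has first column
`(-(d + σ), 0, 0)`. Expanding the determinant along that column splits off the factor
`λ + d + σ`; the remaining `2 × 2` infected block has trace `a₁`, and its determinant equals
`(d + r_a)(d + r_s)(1 - R₀)`, which is how the basic reproduction number enters.
-/

open ContinuousLinearMap Matrix

theorem fderiv_apply_single_of_hasFDerivAt_toLin' {𝕜 n : Type*} [NontriviallyNormedField 𝕜]
    [CompleteSpace 𝕜] [Fintype n] [DecidableEq n] {f : (n → 𝕜) → n → 𝕜} {M : Matrix n n 𝕜} {p : n → 𝕜}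
    (hf : HasFDerivAt f (LinearMap.toContinuousLinearMap (toLin' M)) p) (i j : n) :
    fderiv 𝕜 f p (Pi.single j 1) i = M i j := by
  simp [hf.fderiv, mulVec_single]

theorem det_smul_one_sub_fin_three_of_col_zero {R : Type*} [CommRing R] (a b c e f g h t : R) :
    (t • (1 : Matrix (Fin 3) (Fin 3) R) - !![a, b, c; 0, e, f; 0, g, h]).det =
      (t - a) * ((t - e) * (t - h) - f * g) := by
  simp [det_fin_three, one_apply]
  ring

section SIRS

variable (d σ β N ra rs α μ : ℝ)

def sirsField (x : Fin 3 → ℝ) : Fin 3 → ℝ :=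
  ![(d + σ) * (N - x 0) - β * x 0 * (x 1 + α * x 2) - σ * (x 1 + x 2),
    μ * β * x 0 * (x 1 + α * x 2) - (d + ra) * x 1,
    (1 - μ) * β * x 0 * (x 1 + α * x 2) - (d + rs) * x 2]

def sirsJacobianDiseaseFree : Matrix (Fin 3) (Fin 3) ℝ :=
  !![-(d + σ), -(β * N + σ), -(α * β * N + σ);
     0, μ * β * N - (d + ra), μ * β * N * α;
     0, (1 - μ) * β * N, α * (1 - μ) * β * N - (d + rs)]

theorem hasFDerivAt_sirsField_diseaseFree :
    HasFDerivAt (sirsField d σ β N ra rs α μ)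
      (LinearMap.toContinuousLinearMap (toLin' (sirsJacobianDiseaseFree d σ β N ra rs α μ)))
      ![N, 0, 0] := by
  have hx (j : Fin 3) : HasFDerivAt (fun x : Fin 3 → ℝ => x j)
      (proj j : (Fin 3 → ℝ) →L[ℝ] ℝ) ![N, 0, 0] := hasFDerivAt_apply j _
  have hI (c : ℝ) := ((hx 0).const_mul c).mul ((hx 1).add ((hx 2).const_mul α))
  refine hasFDerivAt_pi'' fun i => ?_
  fin_cases i <;>
    [refine ((((hx 0).const_sub N).const_mul (d + σ)).sub (hI β)).sub
      (((hx 1).add (hx 2)).const_mul σ) |>.congr_fderiv ?_;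
    refine (hI (μ * β)).sub ((hx 1).const_mul (d + ra)) |>.congr_fderiv ?_;
    refine (hI ((1 - μ) * β)).sub ((hx 2).const_mul (d + rs)) |>.congr_fderiv ?_] <;>
  · ext v
    simp [sirsJacobianDiseaseFree, dotProduct, Fin.sum_univ_three]
    ring

theorem sirs_infected_block_det (hra : d + ra ≠ 0) (hrs : d + rs ≠ 0) :
    (μ * β * N - (d + ra)) * (α * (1 - μ) * β * N - (d + rs)) - μ * β * N * α * ((1 - μ) * β * N)
      = (d + ra) * (d + rs) * (1 - β * N * (μ / (d + ra) + α * (1 - μ) / (d + rs))) := by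
  field_simp
  ring

end SIRS

theorem charpoly_at_disease_free_general
    (d σ β N ra rs α μ : ℝ)
    (hd : 0 < d)
    (hra : 0 < ra) (hrs : 0 < rs) :
    let f : (Fin 3 → ℝ) → (Fin 3 → ℝ) := fun x =>
      ![ (d + σ) * (N - x 0) - β * x 0 * (x 1 + α * x 2) - σ * (x 1 + x 2),
         μ * β * x 0 * (x 1 + α * x 2) - (d + ra) * x 1,
         (1 - μ) * β * x 0 * (x 1 + α * x 2) - (d + rs) * x 2 ]
    let J : Matrix (Fin 3) (Fin 3) ℝ := fun i j =>
      fderiv ℝ f ![N, 0, 0] (Pi.single j 1) i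
    let R0 : ℝ := β * N * (μ / (d + ra) + α * (1 - μ) / (d + rs))
    let a0 : ℝ := (d + ra) * (d + rs) * (1 - R0)
    let a1 : ℝ := (μ * β * N - (d + ra)) + (α * (1 - μ) * β * N - (d + rs))
    ∀ lam : ℝ,
      Matrix.det (lam • (1 : Matrix (Fin 3) (Fin 3) ℝ) - J)
        = (lam + d + σ) * (lam ^ 2 - a1 * lam + a0) := by
  intro f J R0 a0 a1 lam
  have hJ : J = sirsJacobianDiseaseFree d σ β N ra rs α μ := funext₂
    (fderiv_apply_single_of_hasFDerivAt_toLin' (hasFDerivAt_sirsField_diseaseFree ..))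
  have hblock := sirs_infected_block_det d β N ra rs α μ (by positivity) (by positivity)
  rw [hJ, sirsJacobianDiseaseFree, det_smul_one_sub_fin_three_of_col_zero]
  linear_combination (lam + d + σ) * hblock

/-- The characteristic polynomial of the Jacobian of the autonomous
SIRS system at the disease-free equilibrium (N,0,0) factors as
(λ + d + σ)(λ² - a₁λ + a₀). The Jacobian is the matrix of partial derivatives of
the vector field at (N,0,0). -/
theorem charpoly_at_disease_free
    (d σ β N ra rs α μ : ℝ)
    (hd : 0 < d) (hσ : 0 < σ) (hβ : 0 < β) (hN : 0 < N)
    (hra : 0 < ra) (hrs : 0 < rs)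
    (hα0 : 0 ≤ α) (hα1 : α ≤ 1) (hμ0 : 0 ≤ μ) (hμ1 : μ ≤ 1) :
    let f : (Fin 3 → ℝ) → (Fin 3 → ℝ) := fun x =>
      ![ (d + σ) * (N - x 0) - β * x 0 * (x 1 + α * x 2) - σ * (x 1 + x 2),
         μ * β * x 0 * (x 1 + α * x 2) - (d + ra) * x 1,
         (1 - μ) * β * x 0 * (x 1 + α * x 2) - (d + rs) * x 2 ]
    let J : Matrix (Fin 3) (Fin 3) ℝ := fun i j =>
      fderiv ℝ f ![N, 0, 0] (Pi.single j 1) i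
    let R0 : ℝ := β * N * (μ / (d + ra) + α * (1 - μ) / (d + rs))
    let a0 : ℝ := (d + ra) * (d + rs) * (1 - R0)
    let a1 : ℝ := (μ * β * N - (d + ra)) + (α * (1 - μ) * β * N - (d + rs))
    ∀ lam : ℝ,
      Matrix.det (lam • (1 : Matrix (Fin 3) (Fin 3) ℝ) - J)
        = (lam + d + σ) * (lam ^ 2 - a1 * lam + a0) :=
  charpoly_at_disease_free_general d σ β N ra rs α μ hd hra hrs
end

section
/- If R0 = βN(μ/(d+r_a) + α(1-μ)/(d+r_s)) < 1, then a₀ = (d+r_a)(d+r_s)(1-R0) > 0 and a₁ = (μβN - (d+r_a)) + (α(1-μ)βN - (d+r_s)) < 0, and hence every root of the polynomial (λ + d + σ)(λ² - a₁λ + a₀) has negative real part. -/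
/-- If R0 < 1 then a₀ > 0, a₁ < 0, and every complex root of
(λ + d + σ)(λ² - a₁λ + a₀) has negative real part. -/
theorem disease_free_roots_negative
    (d σ β N ra rs α μ : ℝ)
    (hd : 0 < d) (hσ : 0 < σ) (hβ : 0 < β) (hN : 0 < N)
    (hra : 0 < ra) (hrs : 0 < rs)
    (hα0 : 0 ≤ α) (hα1 : α ≤ 1) (hμ0 : 0 ≤ μ) (hμ1 : μ ≤ 1)
    (hR0 : β * N * (μ / (d + ra) + α * (1 - μ) / (d + rs)) < 1) :
    let R0 : ℝ := β * N * (μ / (d + ra) + α * (1 - μ) / (d + rs))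
    let a0 : ℝ := (d + ra) * (d + rs) * (1 - R0)
    let a1 : ℝ := (μ * β * N - (d + ra)) + (α * (1 - μ) * β * N - (d + rs))
    0 < a0 ∧ a1 < 0 ∧
    ∀ z : ℂ, (z + (d : ℂ) + (σ : ℂ)) * (z ^ 2 - (a1 : ℂ) * z + (a0 : ℂ)) = 0 →
      z.re < 0 := by
  intro R0 a0 a1
  have hA : (0:ℝ) < d + ra := by linarith
  have hB : (0:ℝ) < d + rs := by linarith
  have hR0' : R0 < 1 := hR0
  have ha0 : 0 < a0 := by
    have : 0 < 1 - R0 := by linarith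
    positivity
  have h1 : 0 ≤ β * N * (α * (1 - μ) / (d + rs)) := by
    have : (0:ℝ) ≤ 1 - μ := by linarith
    positivity
  have h2 : 0 ≤ β * N * (μ / (d + ra)) := by positivity
  have hμβ : μ * β * N < d + ra := by
    have h3 : β * N * (μ / (d + ra)) < 1 := by
      have := hR0'
      simp only [R0] at this
      nlinarith [this]
    have : β * N * (μ / (d + ra)) * (d + ra) < 1 * (d + ra) :=
      mul_lt_mul_of_pos_right h3 hA
    rw [div_eq_mul_inv] at this
    field_simp at this
    nlinarith [this]
  have hαβ : α * (1 - μ) * β * N < d + rs := by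
    have h3 : β * N * (α * (1 - μ) / (d + rs)) < 1 := by
      have := hR0'
      simp only [R0] at this
      nlinarith [this]
    have : β * N * (α * (1 - μ) / (d + rs)) * (d + rs) < 1 * (d + rs) :=
      mul_lt_mul_of_pos_right h3 hB
    rw [div_eq_mul_inv] at this
    field_simp at this
    nlinarith [this]
  have ha1 : a1 < 0 := by simp only [a1]; linarith
  refine ⟨ha0, ha1, ?_⟩
  intro z hz
  rcases mul_eq_zero.1 hz with h | h
  · have hre : z.re + d + σ = 0 := by
      have := congrArg Complex.re h
      simpa using this
    linarith
  · have hre := congrArg Complex.re h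
    have him := congrArg Complex.im h
    simp [Complex.add_re, Complex.sub_re, Complex.mul_re, Complex.mul_im,
      Complex.add_im, Complex.sub_im, pow_two] at hre him
    by_contra hge
    push_neg at hge
    have himy : (z.re * z.im + z.im * z.re - a1 * z.im) * z.im = 0 := by rw [him]; ring
    have hy2 : z.im * z.im = 0 := by nlinarith [himy, mul_self_nonneg z.im, ha1, hge]
    have hax : a1 * z.re ≤ 0 := mul_nonpos_of_nonpos_of_nonneg ha1.le hge
    linarith [hre, hy2, ha0, mul_self_nonneg z.re, hax]
end

section
/- For the rescaled SIRS system with 0 < μ < 1 and R̂0 > 1, the coefficients of the characteristic polynomial λ³ + ξ₂λ² + ξ₁λ + ξ₀ at the endemic equilibrium satisfy ξ₀ = r d₁(R̂0 - 1) > 0, ξ₁ > 0, ξ₂ > 0, and ξ₂ξ₁ - ξ₀ > 0; hence by the Routh–Hurwitz criterion all roots have negative real parts. -/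
set_option maxHeartbeats 1000000 in
lemma cubic_neg_re (a b c : ℝ) (ha : 0 < a) (hb : 0 < b) (hc : 0 < c)
    (h : c < a * b) :
    ∀ z : ℂ, z ^ 3 + (a : ℂ) * z ^ 2 + (b : ℂ) * z + (c : ℂ) = 0 → z.re < 0 := by
  intro z hz
  by_contra hcon
  push_neg at hcon
  rw [Complex.ext_iff] at hz
  obtain ⟨hre, him⟩ := hz
  simp only [Complex.add_re, Complex.add_im, Complex.mul_re, Complex.mul_im,
    Complex.ofReal_re, Complex.ofReal_im, Complex.zero_re, Complex.zero_im,
    pow_succ, pow_zero, Complex.one_re, Complex.one_im] at hre him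
  set x := z.re with hxdef
  set y := z.im with hydef
  have hyfac : y * (3 * x ^ 2 + 2 * a * x + b - y ^ 2) = 0 := by linear_combination him
  rcases mul_eq_zero.mp hyfac with h0 | h0
  · have hkey : x ^ 3 + a * x ^ 2 + b * x + c = 0 := by
      linear_combination hre + (3 * x + a) * y * h0
    nlinarith [hkey, mul_nonneg (mul_nonneg hcon hcon) hcon, mul_nonneg hcon hcon,
      mul_nonneg ha.le (mul_nonneg hcon hcon), mul_nonneg hb.le hcon]
  · have hkey : c - a * b = 8 * x ^ 3 + 8 * a * x ^ 2 + 2 * (a ^ 2 + b) * x := by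
      linear_combination hre - (3 * x + a) * h0
    nlinarith [hkey, mul_nonneg (mul_nonneg hcon hcon) hcon, mul_nonneg hcon hcon,
      mul_nonneg (mul_nonneg ha.le hcon) hcon, mul_nonneg (mul_nonneg ha.le ha.le) hcon,
      mul_nonneg hb.le hcon]

set_option maxHeartbeats 4000000 in
/-- For the rescaled SIRS system with 0 < μ < 1 and R̂0 > 1, the
coefficients of the characteristic polynomial at the endemic equilibrium satisfy
ξ₀ = r d₁ (R̂0 - 1) > 0, ξ₁ > 0, ξ₂ > 0 and ξ₂ξ₁ - ξ₀ > 0; hence by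
Routh–Hurwitz all roots have negative real part. -/
theorem endemic_routh_hurwitz
    (N1 d1 σ1 r μ1 α : ℝ)
    (hN1 : 0 < N1) (hd1 : 0 < d1) (hσ1 : 0 < σ1) (hr : 0 < r)
    (hμ1 : 0 < μ1) (hα : 0 < α)
    (hds : σ1 < d1) (hdsμ : σ1 * μ1 < d1)
    (hR0 : 1 < N1 / d1 * (1 / r + α * μ1)) :
    let R0 : ℝ := N1 / d1 * (1 / r + α * μ1)
    let Ia : ℝ := N1 * (1 - 1 / R0) / (σ1 + r * σ1 * μ1 + r)
    let ξ2 : ℝ := (σ1 + r * σ1 * μ1 + r + r ^ 2 * μ1 * α * σ1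
        + r ^ 3 * μ1 ^ 2 * α * σ1 + r ^ 3 * μ1 * α + d1 * σ1 * μ1 * r * α
        + d1 * σ1 * μ1 ^ 2 * r ^ 2 * α + N1 + d1 * σ1 + d1 * r * σ1 * μ1
        + 2 * N1 * μ1 * r * α + r ^ 2 * μ1 ^ 2 * α ^ 2 * N1)
        / ((σ1 + r * σ1 * μ1 + r) * (r * μ1 * α + 1))
    let ξ1 : ℝ := d1 * (1 + r ^ 2 * μ1 * α) / (r * μ1 * α + 1)
        + (σ1 * μ1 + 1 + r + σ1) * (r * μ1 * α + 1) * Ia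
    let ξ0 : ℝ := N1 * μ1 * r * α + N1 - r * d1
    ξ0 = r * d1 * (R0 - 1) ∧ 0 < ξ0 ∧ 0 < ξ1 ∧ 0 < ξ2 ∧ 0 < ξ2 * ξ1 - ξ0 ∧
    ∀ z : ℂ, z ^ 3 + (ξ2 : ℂ) * z ^ 2 + (ξ1 : ℂ) * z + (ξ0 : ℂ) = 0 →
      z.re < 0 := by
  have hD : (0:ℝ) < σ1 + r * σ1 * μ1 + r := by positivity
  have hK : (0:ℝ) < r * μ1 * α + 1 := by positivity
  have hR0pos : (0:ℝ) < N1 / d1 * (1 / r + α * μ1) := lt_trans one_pos hR0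
  have h1 : d1 < N1 * (1 / r + α * μ1) := by
    rw [div_mul_eq_mul_div, lt_div_iff₀ hd1, one_mul] at hR0
    exact hR0
  have hxi0pos : (0:ℝ) < N1 * μ1 * r * α + N1 - r * d1 := by
    have he : N1 * μ1 * r * α + N1 - r * d1 = r * (N1 * (1 / r + α * μ1) - d1) := by
      field_simp
      ring
    rw [he]
    exact mul_pos hr (sub_pos.mpr h1)
  have hGpos : (0:ℝ) < N1 * (r * μ1 * α + 1) - d1 * r := by nlinarith [hxi0pos]
  have hIaeq : (N1 * (1 - 1 / (N1 / d1 * (1 / r + α * μ1))) / (σ1 + r * σ1 * μ1 + r)) = (N1 * (r * μ1 * α + 1) - d1 * r) / ((σ1 + r * σ1 * μ1 + r) * (r * μ1 * α + 1)) := by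
    rw [div_eq_div_iff hD.ne' (mul_pos hD hK).ne']
    field_simp
    ring
  have hIapos : (0:ℝ) < (N1 * (1 - 1 / (N1 / d1 * (1 / r + α * μ1))) / (σ1 + r * σ1 * μ1 + r)) := by
    rw [hIaeq]
    exact div_pos hGpos (mul_pos hD hK)
  have hQpos : (0:ℝ) < (σ1 + r * σ1 * μ1 + r + r ^ 2 * μ1 * α * σ1 + r ^ 3 * μ1 ^ 2 * α * σ1 + r ^ 3 * μ1 * α + d1 * σ1 * μ1 * r * α + d1 * σ1 * μ1 ^ 2 * r ^ 2 * α + N1 + d1 * σ1 + d1 * r * σ1 * μ1 + 2 * N1 * μ1 * r * α + r ^ 2 * μ1 ^ 2 * α ^ 2 * N1) * (σ1 * μ1 + 1 + r + σ1) - (r * μ1 * α + 1) * (σ1 + r * σ1 * μ1 + r) ^ 2 := by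
    have hident : (σ1 + r * σ1 * μ1 + r + r ^ 2 * μ1 * α * σ1 + r ^ 3 * μ1 ^ 2 * α * σ1 + r ^ 3 * μ1 * α + d1 * σ1 * μ1 * r * α + d1 * σ1 * μ1 ^ 2 * r ^ 2 * α + N1 + d1 * σ1 + d1 * r * σ1 * μ1 + 2 * N1 * μ1 * r * α + r ^ 2 * μ1 ^ 2 * α ^ 2 * N1) * (σ1 * μ1 + 1 + r + σ1) * (r * μ1 * α + 1) ^ 2 - (r * μ1 * α + 1) ^ 3 * (σ1 + r * σ1 * μ1 + r) ^ 2
        = (r + 2 * r ^ 2 * μ1 * α + r ^ 3 * μ1 ^ 2 * α ^ 2 + r ^ 4 * μ1 * α + 2 * r ^ 5 * μ1 ^ 2 * α ^ 2 + r ^ 6 * μ1 ^ 3 * α ^ 3 + σ1 + 2 * σ1 * r * μ1 + 2 * σ1 * r * μ1 * α + 4 * σ1 * r ^ 2 * μ1 ^ 2 * α + σ1 * r ^ 2 * μ1 ^ 2 * α ^ 2 + 2 * σ1 * r ^ 3 * μ1 * α + 2 * σ1 * r ^ 3 * μ1 ^ 3 * α ^ 2 + σ1 * r ^ 4 * μ1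 ^ 2 * α + 4 * σ1 * r ^ 4 * μ1 ^ 2 * α ^ 2 + 2 * σ1 * r ^ 5 * μ1 ^ 3 * α ^ 2 + 2 * σ1 * r ^ 5 * μ1 ^ 3 * α ^ 3 + σ1 * r ^ 6 * μ1 ^ 4 * α ^ 3 + σ1 ^ 2 * μ1 + σ1 ^ 2 * r * μ1 ^ 2 + 2 * σ1 ^ 2 * r * μ1 ^ 2 * α + σ1 ^ 2 * r ^ 2 * μ1 * α + 2 * σ1 ^ 2 * r ^ 2 * μ1 ^ 3 * α + σ1 ^ 2 * r ^ 2 * μ1 ^ 3 * α ^ 2 + σ1 ^ 2 * r ^ 3 * μ1 ^ 2 * α + 2 * σ1 ^ 2 * r ^ 3 * μ1 ^ 2 * α ^ 2 + σ1 ^ 2 * r ^ 3 * μ1 ^ 4 * α ^ 2 + 2 * σ1 ^ 2 * r ^ 4 * μ1 ^ 3 * α ^ 2 + σ1 ^ 2 * r ^ 4 * μ1 ^ 3 * α ^ 3 + σ1 ^ 2 * r ^ 5 * μ1 ^ 4 * α ^ 3 + d1 * r + 2 * d1 * r ^ 2 * μ1 * α + d1 * r ^ 3 * μ1 * α + d1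 * r ^ 3 * μ1 ^ 2 * α ^ 2 + 2 * d1 * r ^ 4 * μ1 ^ 2 * α ^ 2 + d1 * r ^ 5 * μ1 ^ 3 * α ^ 3 + d1 * σ1 + d1 * σ1 * r + 2 * d1 * σ1 * r * μ1 + 2 * d1 * σ1 * r * μ1 * α + 3 * d1 * σ1 * r ^ 2 * μ1 * α + 6 * d1 * σ1 * r ^ 2 * μ1 ^ 2 * α + d1 * σ1 * r ^ 2 * μ1 ^ 2 * α ^ 2 + d1 * σ1 * r ^ 3 * μ1 ^ 2 * α + 3 * d1 * σ1 * r ^ 3 * μ1 ^ 2 * α ^ 2 + 6 * d1 * σ1 * r ^ 3 * μ1 ^ 3 * α ^ 2 + 2 * d1 * σ1 * r ^ 4 * μ1 ^ 3 * α ^ 2 + d1 * σ1 * r ^ 4 * μ1 ^ 3 * α ^ 3 + 2 * d1 * σ1 * r ^ 4 * μ1 ^ 4 * α ^ 3 + d1 * σ1 * r ^ 5 * μ1 ^ 4 * α ^ 3 + d1 * σ1 ^ 2 + d1 * σ1 ^ 2 * μ1 + d1 * σ1 ^ 2 * r * μ1 + 3 * d1 * σ1 ^ 2 * r * μ1 *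 α + d1 * σ1 ^ 2 * r * μ1 ^ 2 + 3 * d1 * σ1 ^ 2 * r * μ1 ^ 2 * α + 3 * d1 * σ1 ^ 2 * r ^ 2 * μ1 ^ 2 * α + 3 * d1 * σ1 ^ 2 * r ^ 2 * μ1 ^ 2 * α ^ 2 + 3 * d1 * σ1 ^ 2 * r ^ 2 * μ1 ^ 3 * α + 3 * d1 * σ1 ^ 2 * r ^ 2 * μ1 ^ 3 * α ^ 2 + 3 * d1 * σ1 ^ 2 * r ^ 3 * μ1 ^ 3 * α ^ 2 + d1 * σ1 ^ 2 * r ^ 3 * μ1 ^ 3 * α ^ 3 + 3 * d1 * σ1 ^ 2 * r ^ 3 * μ1 ^ 4 * α ^ 2 + d1 * σ1 ^ 2 * r ^ 3 * μ1 ^ 4 * α ^ 3 + d1 * σ1 ^ 2 * r ^ 4 * μ1 ^ 4 * α ^ 3 + d1 * σ1 ^ 2 * r ^ 4 * μ1 ^ 5 * α ^ 3)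
        + (N1 * (r * μ1 * α + 1) - d1 * r) * (1 + r + 3 * r * μ1 * α + 3 * r ^ 2 * μ1 * α + 3 * r ^ 2 * μ1 ^ 2 * α ^ 2 + 3 * r ^ 3 * μ1 ^ 2 * α ^ 2 + r ^ 3 * μ1 ^ 3 * α ^ 3 + r ^ 4 * μ1 ^ 3 * α ^ 3 + σ1 + σ1 * μ1 + 3 * σ1 * r * μ1 * α + 3 * σ1 * r * μ1 ^ 2 * α + 3 * σ1 * r ^ 2 * μ1 ^ 2 * α ^ 2 + 3 * σ1 * r ^ 2 * μ1 ^ 3 * α ^ 2 + σ1 * r ^ 3 * μ1 ^ 3 * α ^ 3 + σ1 * r ^ 3 * μ1 ^ 4 * α ^ 3)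
        + (r ^ 2 + 2 * r ^ 3 * μ1 * α + r ^ 4 * μ1 ^ 2 * α ^ 2 + σ1 * r + σ1 * r ^ 2 * μ1 + 3 * σ1 * r ^ 2 * μ1 * α + 2 * σ1 * r ^ 3 * μ1 ^ 2 * α + 3 * σ1 * r ^ 3 * μ1 ^ 2 * α ^ 2 + σ1 * r ^ 4 * μ1 ^ 3 * α ^ 2 + σ1 * r ^ 4 * μ1 ^ 3 * α ^ 3) * (d1 - σ1 * μ1)
        + (r ^ 2 * μ1 * α + 2 * r ^ 3 * μ1 ^ 2 * α ^ 2 + r ^ 4 * μ1 ^ 3 * α ^ 3 + σ1 * r * μ1 * α + 2 * σ1 * r ^ 2 * μ1 ^ 2 * α ^ 2 + σ1 * r ^ 3 * μ1 ^ 3 * α ^ 3) * (d1 - σ1) := by ring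
    have h2 : (0:ℝ) < (σ1 + r * σ1 * μ1 + r + r ^ 2 * μ1 * α * σ1 + r ^ 3 * μ1 ^ 2 * α * σ1 + r ^ 3 * μ1 * α + d1 * σ1 * μ1 * r * α + d1 * σ1 * μ1 ^ 2 * r ^ 2 * α + N1 + d1 * σ1 + d1 * r * σ1 * μ1 + 2 * N1 * μ1 * r * α + r ^ 2 * μ1 ^ 2 * α ^ 2 * N1) * (σ1 * μ1 + 1 + r + σ1) * (r * μ1 * α + 1) ^ 2 - (r * μ1 * α + 1) ^ 3 * (σ1 + r * σ1 * μ1 + r) ^ 2 := by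
      rw [hident]
      have p1 : (0:ℝ) < (r + 2 * r ^ 2 * μ1 * α + r ^ 3 * μ1 ^ 2 * α ^ 2 + r ^ 4 * μ1 * α + 2 * r ^ 5 * μ1 ^ 2 * α ^ 2 + r ^ 6 * μ1 ^ 3 * α ^ 3 + σ1 + 2 * σ1 * r * μ1 + 2 * σ1 * r * μ1 * α + 4 * σ1 * r ^ 2 * μ1 ^ 2 * α + σ1 * r ^ 2 * μ1 ^ 2 * α ^ 2 + 2 * σ1 * r ^ 3 * μ1 * α + 2 * σ1 * r ^ 3 * μ1 ^ 3 * α ^ 2 + σ1 * r ^ 4 * μ1 ^ 2 * α + 4 * σ1 * r ^ 4 * μ1 ^ 2 * α ^ 2 + 2 * σ1 * r ^ 5 * μ1 ^ 3 * α ^ 2 + 2 * σ1 * r ^ 5 * μ1 ^ 3 * α ^ 3 + σ1 * r ^ 6 * μ1 ^ 4 * α ^ 3 + σ1 ^ 2 * μ1 + σ1 ^ 2 * r * μ1 ^ 2 + 2 * σ1 ^ 2 * r * μ1 ^ 2 * α + σ1 ^ 2 * r ^ 2 * μ1 * α + 2 * σ1 ^ 2 * r ^ 2 * μ1 ^ 3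 * α + σ1 ^ 2 * r ^ 2 * μ1 ^ 3 * α ^ 2 + σ1 ^ 2 * r ^ 3 * μ1 ^ 2 * α + 2 * σ1 ^ 2 * r ^ 3 * μ1 ^ 2 * α ^ 2 + σ1 ^ 2 * r ^ 3 * μ1 ^ 4 * α ^ 2 + 2 * σ1 ^ 2 * r ^ 4 * μ1 ^ 3 * α ^ 2 + σ1 ^ 2 * r ^ 4 * μ1 ^ 3 * α ^ 3 + σ1 ^ 2 * r ^ 5 * μ1 ^ 4 * α ^ 3 + d1 * r + 2 * d1 * r ^ 2 * μ1 * α + d1 * r ^ 3 * μ1 * α + d1 * r ^ 3 * μ1 ^ 2 * α ^ 2 + 2 * d1 * r ^ 4 * μ1 ^ 2 * α ^ 2 + d1 * r ^ 5 * μ1 ^ 3 * α ^ 3 + d1 * σ1 + d1 * σ1 * r + 2 * d1 * σ1 * r * μ1 + 2 * d1 * σ1 * r * μ1 * α + 3 * d1 * σ1 * r ^ 2 * μ1 * α + 6 * d1 * σ1 * r ^ 2 * μ1 ^ 2 * α + d1 * σ1 * r ^ 2 * μ1 ^ 2 * α ^ 2 + d1 * σ1 * r ^ 3 * μ1 ^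 2 * α + 3 * d1 * σ1 * r ^ 3 * μ1 ^ 2 * α ^ 2 + 6 * d1 * σ1 * r ^ 3 * μ1 ^ 3 * α ^ 2 + 2 * d1 * σ1 * r ^ 4 * μ1 ^ 3 * α ^ 2 + d1 * σ1 * r ^ 4 * μ1 ^ 3 * α ^ 3 + 2 * d1 * σ1 * r ^ 4 * μ1 ^ 4 * α ^ 3 + d1 * σ1 * r ^ 5 * μ1 ^ 4 * α ^ 3 + d1 * σ1 ^ 2 + d1 * σ1 ^ 2 * μ1 + d1 * σ1 ^ 2 * r * μ1 + 3 * d1 * σ1 ^ 2 * r * μ1 * α + d1 * σ1 ^ 2 * r * μ1 ^ 2 + 3 * d1 * σ1 ^ 2 * r * μ1 ^ 2 * α + 3 * d1 * σ1 ^ 2 * r ^ 2 * μ1 ^ 2 * α + 3 * d1 * σ1 ^ 2 * r ^ 2 * μ1 ^ 2 * α ^ 2 + 3 * d1 * σ1 ^ 2 * r ^ 2 * μ1 ^ 3 * α + 3 * d1 * σ1 ^ 2 * r ^ 2 * μ1 ^ 3 * α ^ 2 + 3 * d1 * σ1 ^ 2 * r ^ 3 * μ1 ^ 3 * α ^ 2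 + d1 * σ1 ^ 2 * r ^ 3 * μ1 ^ 3 * α ^ 3 + 3 * d1 * σ1 ^ 2 * r ^ 3 * μ1 ^ 4 * α ^ 2 + d1 * σ1 ^ 2 * r ^ 3 * μ1 ^ 4 * α ^ 3 + d1 * σ1 ^ 2 * r ^ 4 * μ1 ^ 4 * α ^ 3 + d1 * σ1 ^ 2 * r ^ 4 * μ1 ^ 5 * α ^ 3) := by positivity
      have p2 : (0:ℝ) < (1 + r + 3 * r * μ1 * α + 3 * r ^ 2 * μ1 * α + 3 * r ^ 2 * μ1 ^ 2 * α ^ 2 + 3 * r ^ 3 * μ1 ^ 2 * α ^ 2 + r ^ 3 * μ1 ^ 3 * α ^ 3 + r ^ 4 * μ1 ^ 3 * α ^ 3 + σ1 + σ1 * μ1 + 3 * σ1 * r * μ1 * α + 3 * σ1 * r * μ1 ^ 2 * α + 3 * σ1 * r ^ 2 * μ1 ^ 2 * α ^ 2 + 3 * σ1 * r ^ 2 * μ1 ^ 3 * α ^ 2 + σ1 * r ^ 3 * μ1 ^ 3 * α ^ 3 + σ1 * r ^ 3 * μ1 ^ 4 * α ^ 3) := by positivity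
      have p3 : (0:ℝ) < (r ^ 2 + 2 * r ^ 3 * μ1 * α + r ^ 4 * μ1 ^ 2 * α ^ 2 + σ1 * r + σ1 * r ^ 2 * μ1 + 3 * σ1 * r ^ 2 * μ1 * α + 2 * σ1 * r ^ 3 * μ1 ^ 2 * α + 3 * σ1 * r ^ 3 * μ1 ^ 2 * α ^ 2 + σ1 * r ^ 4 * μ1 ^ 3 * α ^ 2 + σ1 * r ^ 4 * μ1 ^ 3 * α ^ 3) := by positivity
      have p4 : (0:ℝ) < (r ^ 2 * μ1 * α + 2 * r ^ 3 * μ1 ^ 2 * α ^ 2 + r ^ 4 * μ1 ^ 3 * α ^ 3 + σ1 * r * μ1 * α + 2 * σ1 * r ^ 2 * μ1 ^ 2 * α ^ 2 + σ1 * r ^ 3 * μ1 ^ 3 * α ^ 3) := by positivity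
      have q2 := mul_pos hGpos p2
      have q3 := mul_pos p3 (sub_pos.mpr hdsμ)
      have q4 := mul_pos p4 (sub_pos.mpr hds)
      linarith
    have h3 : (0:ℝ) < ((σ1 + r * σ1 * μ1 + r + r ^ 2 * μ1 * α * σ1 + r ^ 3 * μ1 ^ 2 * α * σ1 + r ^ 3 * μ1 * α + d1 * σ1 * μ1 * r * α + d1 * σ1 * μ1 ^ 2 * r ^ 2 * α + N1 + d1 * σ1 + d1 * r * σ1 * μ1 + 2 * N1 * μ1 * r * α + r ^ 2 * μ1 ^ 2 * α ^ 2 * N1) * (σ1 * μ1 + 1 + r + σ1) - (r * μ1 * α + 1) * (σ1 + r * σ1 * μ1 + r) ^ 2) * (r * μ1 * α + 1) ^ 2 := by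
      have hre : ((σ1 + r * σ1 * μ1 + r + r ^ 2 * μ1 * α * σ1 + r ^ 3 * μ1 ^ 2 * α * σ1 + r ^ 3 * μ1 * α + d1 * σ1 * μ1 * r * α + d1 * σ1 * μ1 ^ 2 * r ^ 2 * α + N1 + d1 * σ1 + d1 * r * σ1 * μ1 + 2 * N1 * μ1 * r * α + r ^ 2 * μ1 ^ 2 * α ^ 2 * N1) * (σ1 * μ1 + 1 + r + σ1) - (r * μ1 * α + 1) * (σ1 + r * σ1 * μ1 + r) ^ 2) * (r * μ1 * α + 1) ^ 2
          = (σ1 + r * σ1 * μ1 + r + r ^ 2 * μ1 * α * σ1 + r ^ 3 * μ1 ^ 2 * α * σ1 + r ^ 3 * μ1 * α + d1 * σ1 * μ1 * r * α + d1 * σ1 * μ1 ^ 2 * r ^ 2 * α + N1 + d1 * σ1 + d1 * r * σ1 * μ1 + 2 * N1 * μ1 * r * α + r ^ 2 * μ1 ^ 2 * α ^ 2 * N1) * (σ1 * μ1 + 1 + r + σ1) * (r * μ1 * α + 1) ^ 2 - (r * μ1 * α + 1) ^ 3 * (σ1 + r * σ1 * μ1 + r) ^ 2 := by ring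
      rw [hre]
      exact h2
    rcases mul_pos_iff.mp h3 with ⟨hh, _⟩ | ⟨_, hh⟩
    · exact hh
    · exact absurd hh (not_lt.mpr (le_of_lt (pow_pos hK 2)))
  have hxi1pos : (0:ℝ) < d1 * (1 + r ^ 2 * μ1 * α) / (r * μ1 * α + 1) + (σ1 * μ1 + 1 + r + σ1) * (r * μ1 * α + 1) * (N1 * (1 - 1 / (N1 / d1 * (1 / r + α * μ1))) / (σ1 + r * σ1 * μ1 + r)) :=
    add_pos (by positivity) (mul_pos (by positivity) hIapos)
  have hxi2pos : (0:ℝ) < (σ1 + r * σ1 * μ1 + r + r ^ 2 * μ1 * α * σ1 + r ^ 3 * μ1 ^ 2 * α * σ1 + r ^ 3 * μ1 * α + d1 * σ1 * μ1 * r * α + d1 * σ1 * μ1 ^ 2 * r ^ 2 * α + N1 + d1 * σ1 + d1 * r * σ1 * μ1 + 2 * N1 * μ1 * r * α + r ^ 2 * μ1 ^ 2 * α ^ 2 * N1) / ((σ1 + r * σ1 * μ1 + r) * (r * μ1 * α + 1)) := by positivity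
  have heq0 : N1 * μ1 * r * α + N1 - r * d1 = r * d1 * ((N1 / d1 * (1 / r + α * μ1)) - 1) := by
    field_simp
    ring
  have hRH2 : (0:ℝ) < ((σ1 + r * σ1 * μ1 + r + r ^ 2 * μ1 * α * σ1 + r ^ 3 * μ1 ^ 2 * α * σ1 + r ^ 3 * μ1 * α + d1 * σ1 * μ1 * r * α + d1 * σ1 * μ1 ^ 2 * r ^ 2 * α + N1 + d1 * σ1 + d1 * r * σ1 * μ1 + 2 * N1 * μ1 * r * α + r ^ 2 * μ1 ^ 2 * α ^ 2 * N1) / ((σ1 + r * σ1 * μ1 + r) * (r * μ1 * α + 1))) * (d1 * (1 + r ^ 2 * μ1 * α) / (r * μ1 * α + 1) + (σ1 * μ1 + 1 + r + σ1) * (r * μ1 * α + 1) * ((N1 * (r * μ1 * α + 1) - d1 * r) / ((σ1 + r * σ1 * μ1 + r) * (r * μ1 * α + 1)))) - (N1 * μ1 * r * α + N1 - r * d1) := by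
    have hsplit : ((σ1 + r * σ1 * μ1 + r + r ^ 2 * μ1 * α * σ1 + r ^ 3 * μ1 ^ 2 * α * σ1 + r ^ 3 * μ1 * α + d1 * σ1 * μ1 * r * α + d1 * σ1 * μ1 ^ 2 * r ^ 2 * α + N1 + d1 * σ1 + d1 * r * σ1 * μ1 + 2 * N1 * μ1 * r * α + r ^ 2 * μ1 ^ 2 * α ^ 2 * N1) / ((σ1 + r * σ1 * μ1 + r) * (r * μ1 * α + 1))) * (d1 * (1 + r ^ 2 * μ1 * α) / (r * μ1 * α + 1) + (σ1 * μ1 + 1 + r + σ1) * (r * μ1 * α + 1) * ((N1 * (r * μ1 * α + 1) - d1 * r) / ((σ1 + r * σ1 * μ1 + r) * (r * μ1 * α + 1)))) - (N1 * μ1 * r * α + N1 - r * d1)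
        = (σ1 + r * σ1 * μ1 + r + r ^ 2 * μ1 * α * σ1 + r ^ 3 * μ1 ^ 2 * α * σ1 + r ^ 3 * μ1 * α + d1 * σ1 * μ1 * r * α + d1 * σ1 * μ1 ^ 2 * r ^ 2 * α + N1 + d1 * σ1 + d1 * r * σ1 * μ1 + 2 * N1 * μ1 * r * α + r ^ 2 * μ1 ^ 2 * α ^ 2 * N1) * (d1 * (1 + r ^ 2 * μ1 * α)) / ((σ1 + r * σ1 * μ1 + r) * (r * μ1 * α + 1) ^ 2)
          + ((N1 * (r * μ1 * α + 1) - d1 * r) / ((σ1 + r * σ1 * μ1 + r) * (r * μ1 * α + 1))) * ((σ1 + r * σ1 * μ1 + r + r ^ 2 * μ1 * α * σ1 + r ^ 3 * μ1 ^ 2 * α * σ1 + r ^ 3 * μ1 * α + d1 * σ1 * μ1 * r * α + d1 * σ1 * μ1 ^ 2 * r ^ 2 * α + N1 + d1 * σ1 + d1 * r * σ1 * μ1 + 2 * N1 * μ1 * r * α + r ^ 2 * μ1 ^ 2 * α ^ 2 * N1) * (σ1 * μ1 + 1 + r + σ1) - (r * μ1 * α + 1) * (σ1 + r * σ1 * μ1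 + r) ^ 2) / (σ1 + r * σ1 * μ1 + r) := by
      field_simp
      ring
    rw [hsplit]
    have hIa2pos : (0:ℝ) < ((N1 * (r * μ1 * α + 1) - d1 * r) / ((σ1 + r * σ1 * μ1 + r) * (r * μ1 * α + 1))) := div_pos hGpos (mul_pos hD hK)
    exact add_pos (by positivity) (div_pos (mul_pos hIa2pos hQpos) hD)
  have hRH : (0:ℝ) < ((σ1 + r * σ1 * μ1 + r + r ^ 2 * μ1 * α * σ1 + r ^ 3 * μ1 ^ 2 * α * σ1 + r ^ 3 * μ1 * α + d1 * σ1 * μ1 * r * α + d1 * σ1 * μ1 ^ 2 * r ^ 2 * α + N1 + d1 * σ1 + d1 * r * σ1 * μ1 + 2 * N1 * μ1 * r * α + r ^ 2 * μ1 ^ 2 * α ^ 2 * N1) / ((σ1 + r * σ1 * μ1 + r) * (r * μ1 * α + 1))) * (d1 * (1 + r ^ 2 * μ1 * α) / (r * μ1 * α + 1) + (σ1 * μ1 + 1 + r + σ1) * (r * μ1 * α + 1) * (N1 * (1 - 1 / (N1 / d1 * (1 / r + α * μ1))) / (σ1 + r * σ1 * μ1 + r))) - (N1 * μ1 * r * α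 + N1 - r * d1) := by
    rw [hIaeq]
    exact hRH2
  exact ⟨heq0, hxi0pos, hxi1pos, hxi2pos, hRH,
    cubic_neg_re _ _ _ hxi2pos hxi1pos hxi0pos (by linarith [hRH])⟩
end

section
/- Global stability of E₀ when R0 ≤ 1 via a Lyapunov function: for L(S, I_a, I_s) = I_a + ((d+r_a)/(d+r_s))αI_s, the derivative of L along solutions of the autonomous SIRS system satisfies L' = (μ + α(1-μ)(d+r_a)/(d+r_s))βS(I_a+αI_s) - (d+r_a)(I_a + αI_s) ≤ (d+r_a)(I_a + αI_s)(R0 · S/N - 1), which is ≤ 0 on D₀ whenever R0 ≤ 1. -/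
/-- For the Lyapunov function L = I_a + ((d+r_a)/(d+r_s))αI_s,
its derivative along solutions of the autonomous SIRS system equals
(μ + α(1-μ)(d+r_a)/(d+r_s))βS(I_a+αI_s) - (d+r_a)(I_a+αI_s), which is at most
(d+r_a)(I_a+αI_s)(R0·S/N - 1), and is ≤ 0 on D₀ when R0 ≤ 1. -/
theorem lyapunov_derivative_disease_free
    (d σ β N ra rs α μ : ℝ)
    (hd : 0 < d) (hσ : 0 < σ) (hβ : 0 < β) (hN : 0 < N)
    (hra : 0 < ra) (hrs : 0 < rs)
    (hα0 : 0 ≤ α) (hα1 : α ≤ 1) (hμ0 : 0 ≤ μ) (hμ1 : μ ≤ 1) :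
    let R0 : ℝ := β * N * (μ / (d + ra) + α * (1 - μ) / (d + rs))
    ∀ S Ia Is : ℝ, 0 ≤ S → S ≤ N → 0 ≤ Ia → 0 ≤ Is →
      let Ia' : ℝ := μ * β * S * (Ia + α * Is) - (d + ra) * Ia
      let Is' : ℝ := (1 - μ) * β * S * (Ia + α * Is) - (d + rs) * Is
      let L' : ℝ := Ia' + (d + ra) / (d + rs) * α * Is'
      L' = (μ + α * (1 - μ) * (d + ra) / (d + rs)) * β * S * (Ia + α * Is)
            - (d + ra) * (Ia + α * Is) ∧
      L' ≤ (d + ra) * (Ia + α * Is) * (R0 * S / N - 1) ∧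
      (R0 ≤ 1 → L' ≤ 0) := by
  intro R0 S Ia Is hS hSN hIa hIs Ia' Is' L'
  have hdra : (0:ℝ) < d + ra := by linarith
  have hdrs : (0:ℝ) < d + rs := by linarith
  have heq : L' = (d + ra) * (Ia + α * Is) * (R0 * S / N - 1) := by
    simp only [L', Ia', Is', R0]
    field_simp
    ring
  have hR0 : 0 ≤ R0 := by
    have h1 : 0 ≤ μ / (d + ra) := div_nonneg hμ0 hdra.le
    have h2 : 0 ≤ α * (1 - μ) / (d + rs) :=
      div_nonneg (mul_nonneg hα0 (by linarith)) hdrs.le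
    have : 0 ≤ β * N := mul_nonneg hβ.le hN.le
    positivity
  refine ⟨?_, ?_, ?_⟩
  · simp only [L', Ia', Is']
    field_simp
    ring
  · exact le_of_eq heq
  · intro hR1
    rw [heq]
    have hfac : R0 * S / N - 1 ≤ 0 := by
      have : R0 * S ≤ 1 * N := by
        calc R0 * S ≤ 1 * S := mul_le_mul_of_nonneg_right hR1 hS
        _ = S := one_mul S
        _ ≤ N := hSN
        _ = 1 * N := (one_mul N).symm
      have h2 := (div_le_div_iff_of_pos_right hN).mpr this
      rw [one_mul, div_self hN.ne'] at h2
      linarith [h2]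
    have hpos : 0 ≤ (d + ra) * (Ia + α * Is) :=
      mul_nonneg hdra.le (by positivity)
    exact mul_nonpos_of_nonneg_of_nonpos hpos hfac
end

section
/- For the planar system x' = (d+σ)(N + σ/(αβ)) - (d+σ)x - αβxy, y' = αβxy - (d+r_s+σ)y with unique positive equilibrium (x₀, y₀), the Lyapunov function V(x,y) = (1/2)(x-x₀)² + x₀(y - y₀ - y₀ ln(y/y₀)) satisfies V ≥ 0 with equality iff (x,y) = (x₀,y₀), and its derivative along trajectories equals -(x-x₀)²(αβy + d + σ) ≤ 0. -/
/-!
`V` is the Goh–Volterra Lyapunov function: the quadratic part is minimised at `x₀`, and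
`y - y₀ - y₀ log (y / y₀) ≥ 0` with equality only at `y = y₀` because `log u ≤ u - 1`.
Along trajectories the cross terms cancel: the `y`-part contributes `x₀ αβ (x - x₀)(y - y₀)`,
which is exactly what is needed to complete `(x - x₀) x'` to `-(x - x₀)² (αβ y + d + σ)` once the
equilibrium equations are used to rewrite `x'` and `y'` around `(x₀, y₀)`.
-/

open Real

theorem sub_sub_mul_log_div_nonneg {a y : ℝ} (ha : 0 < a) (hy : 0 < y) :
    0 ≤ y - a - a * log (y / a) := by
  have hlog := mul_le_mul_of_nonneg_left (log_le_sub_one_of_pos (div_pos hy ha)) ha.le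
  rw [mul_sub, mul_div_cancel₀ y ha.ne', mul_one] at hlog
  linarith

theorem sub_sub_mul_log_div_pos {a y : ℝ} (ha : 0 < a) (hy : 0 < y) (hya : y ≠ a) :
    0 < y - a - a * log (y / a) := by
  have hdiv : y / a ≠ 1 := fun h => hya ((div_eq_one_iff_eq ha.ne').mp h)
  have hlog := mul_lt_mul_of_pos_left (log_lt_sub_one_of_pos (div_pos hy ha) hdiv) ha
  rw [mul_sub, mul_div_cancel₀ y ha.ne', mul_one] at hlog
  linarith

noncomputable def lyapunovV (x₀ y₀ x y : ℝ) : ℝ :=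
  1 / 2 * (x - x₀) ^ 2 + x₀ * (y - y₀ - y₀ * log (y / y₀))

section lyapunovV

variable {x₀ y₀ x y : ℝ}

theorem lyapunovV_nonneg (hx₀ : 0 ≤ x₀) (hy₀ : 0 < y₀) (hy : 0 < y) :
    0 ≤ lyapunovV x₀ y₀ x y := by
  unfold lyapunovV
  have := sub_sub_mul_log_div_nonneg hy₀ hy
  positivity

theorem lyapunovV_eq_zero_iff (hx₀ : 0 < x₀) (hy₀ : 0 < y₀) (hy : 0 < y) :
    lyapunovV x₀ y₀ x y = 0 ↔ x = x₀ ∧ y = y₀ := by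
  unfold lyapunovV
  have hlog := sub_sub_mul_log_div_nonneg hy₀ hy
  constructor
  · intro hV
    have hsq : (x - x₀) ^ 2 = 0 := by nlinarith [sq_nonneg (x - x₀), mul_nonneg hx₀.le hlog]
    refine ⟨by simpa [sub_eq_zero] using hsq, ?_⟩
    by_contra hyy
    nlinarith [sq_nonneg (x - x₀), mul_pos hx₀ (sub_sub_mul_log_div_pos hy₀ hy hyy)]
  · rintro ⟨rfl, rfl⟩
    simp [div_self hy₀.ne']

theorem hasDerivAt_lyapunovV {f g : ℝ → ℝ} {f' g' t : ℝ} (hf : HasDerivAt f f' t)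
    (hg : HasDerivAt g g' t) (hgt : g t ≠ 0) (hy₀ : y₀ ≠ 0) :
    HasDerivAt (fun u => lyapunovV x₀ y₀ (f u) (g u))
      ((f t - x₀) * f' + x₀ * (1 - y₀ / g t) * g') t := by
  have hlog := (hg.div_const y₀).log (div_ne_zero hgt hy₀)
  have hV := ((hf.sub_const x₀).pow 2).const_mul (1 / 2 : ℝ) |>.add
    (((hg.sub_const y₀).sub (hlog.const_mul y₀)).const_mul x₀)
  refine hV.congr_deriv ?_
  field_simp
  ring

end lyapunovV

/-- The left side is the orbital derivative of `lyapunovV` for `x' = Λ - μ x - k x y`,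
`y' = k x y - m y`; here `k = αβ`, `μ = d + σ`, `m = d + r_s + σ`, `Λ = (d + σ)(N + σ/(αβ))`. -/
theorem lyapunovV_orbital_derivative {k m μ Λ x₀ y₀ x y : ℝ} (hy : y ≠ 0)
    (hk : k * x₀ = m) (hΛ : Λ = μ * x₀ + k * x₀ * y₀) :
    (x - x₀) * (Λ - μ * x - k * x * y) + x₀ * (1 - y₀ / y) * (k * x * y - m * y)
      = -(x - x₀) ^ 2 * (k * y + μ) := by
  subst hk hΛ
  field_simp
  ring

theorem planar_lyapunov_general
    (d σ β rs α N x0 y0 : ℝ)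
    (hd : 0 < d) (hσ : 0 < σ) (hβ : 0 < β) (hα : 0 < α)
    (hx0 : 0 < x0) (hy0 : 0 < y0)
    (heq1 : α * β * x0 = d + rs + σ)
    (heq2 : (d + σ) * (N + σ / (α * β)) = (d + σ) * x0 + α * β * x0 * y0) :
    let V : ℝ → ℝ → ℝ := fun x y =>
      (1 / 2) * (x - x0) ^ 2 + x0 * (y - y0 - y0 * Real.log (y / y0))
    (∀ x y : ℝ, 0 < x → 0 < y → 0 ≤ V x y) ∧
    (∀ x y : ℝ, 0 < x → 0 < y → (V x y = 0 ↔ x = x0 ∧ y = y0)) ∧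
    (∀ (x y : ℝ → ℝ) (t : ℝ), 0 < x t → 0 < y t →
      HasDerivAt x ((d + σ) * (N + σ / (α * β)) - (d + σ) * x t
        - α * β * x t * y t) t →
      HasDerivAt y (α * β * x t * y t - (d + rs + σ) * y t) t →
      HasDerivAt (fun u => V (x u) (y u))
        (-(x t - x0) ^ 2 * (α * β * y t + d + σ)) t ∧
      -(x t - x0) ^ 2 * (α * β * y t + d + σ) ≤ 0) := by
  intro V
  refine ⟨fun x y _ hy => lyapunovV_nonneg hx0.le hy0 hy,
    fun x y _ hy => lyapunovV_eq_zero_iff hx0 hy0 hy, fun x y t _ hyt hx' hy' => ⟨?_, ?_⟩⟩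
  · have hV := hasDerivAt_lyapunovV (x₀ := x0) hx' hy' hyt.ne' hy0.ne'
    rwa [lyapunovV_orbital_derivative hyt.ne' heq1 heq2, ← add_assoc] at hV
  · have hrate : 0 ≤ α * β * y t + d + σ := by positivity
    exact mul_nonpos_of_nonpos_of_nonneg (neg_nonpos.mpr (sq_nonneg _)) hrate

/-- For the planar system x' = (d+σ)(N+σ/(αβ)) - (d+σ)x - αβxy,
y' = αβxy - (d+r_s+σ)y with positive equilibrium (x₀,y₀), the Lyapunov function
V(x,y) = (1/2)(x-x₀)² + x₀(y - y₀ - y₀ ln(y/y₀)) is nonnegative, vanishes only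
at (x₀,y₀), and its derivative along trajectories equals
-(x-x₀)²(αβy + d + σ) ≤ 0. -/
theorem planar_lyapunov
    (d σ β rs α N x0 y0 : ℝ)
    (hd : 0 < d) (hσ : 0 < σ) (hβ : 0 < β) (hrs : 0 < rs) (hα : 0 < α)
    (hN : 0 < N) (hx0 : 0 < x0) (hy0 : 0 < y0)
    (heq1 : α * β * x0 = d + rs + σ)
    (heq2 : (d + σ) * (N + σ / (α * β)) = (d + σ) * x0 + α * β * x0 * y0) :
    let V : ℝ → ℝ → ℝ := fun x y =>
      (1 / 2) * (x - x0) ^ 2 + x0 * (y - y0 - y0 * Real.log (y / y0))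
    (∀ x y : ℝ, 0 < x → 0 < y → 0 ≤ V x y) ∧
    (∀ x y : ℝ, 0 < x → 0 < y → (V x y = 0 ↔ x = x0 ∧ y = y0)) ∧
    (∀ (x y : ℝ → ℝ) (t : ℝ), 0 < x t → 0 < y t →
      HasDerivAt x ((d + σ) * (N + σ / (α * β)) - (d + σ) * x t
        - α * β * x t * y t) t →
      HasDerivAt y (α * β * x t * y t - (d + rs + σ) * y t) t →
      HasDerivAt (fun u => V (x u) (y u))
        (-(x t - x0) ^ 2 * (α * β * y t + d + σ)) t ∧
      -(x t - x0) ^ 2 * (α * β * y t + d + σ) ≤ 0) :=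
  planar_lyapunov_general d σ β rs α N x0 y0 hd hσ hβ hα hx0 hy0 heq1 heq2
end

section
/- For the reduced system (case r_a = r_s = r) S' = (d+σ)N - σN₁ - dS - βSI, I' = μ̃SI - (d+r)I, N₁' = (d+σ)N - (d+r+σ)N₁ + rS with equilibrium (S*, I*, N₁*), the Lyapunov functional V₁ = (ν₁/2)(S-S*)² + ν₂I*g(I/I*) + (ν₃/2)(N₁-N₁*)², where g(x) = x - 1 - ln x, ν₂ = ν₁βS*/μ̃, ν₃ = ν₁σ/r, has derivative along trajectories equal to -ν₁d S*²(x-1)² - ν₃(d+r+σ)N₁*²(z-1)² - ν₁βS*²I* y(x-1)² ≤ 0, where x = S/S*, y = I/I*, z = N₁/N₁*. -/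
/-- For the reduced SIRS system (r_a = r_s = r) with endemic
equilibrium (S*, I*, N₁*), the Lyapunov functional
V₁ = (ν₁/2)(S-S*)² + ν₂I* g(I/I*) + (ν₃/2)(N₁-N₁*)², g(x) = x - 1 - ln x,
ν₂ = ν₁βS*/μ̃, ν₃ = ν₁σ/r, has derivative along trajectories equal to
-ν₁dS*²(x-1)² - ν₃(d+r+σ)N₁*²(z-1)² - ν₁βS*²I* y(x-1)² ≤ 0, where
x = S/S*, y = I/I*, z = N₁/N₁*. -/
theorem reduced_system_lyapunov
    (d σ β N r μt ν1 Sstar Istar N1star : ℝ)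
    (hd : 0 < d) (hσ : 0 < σ) (hβ : 0 < β) (hN : 0 < N) (hr : 0 < r)
    (hμt : 0 < μt) (hν1 : 0 < ν1)
    (hSs : 0 < Sstar) (hIs : 0 < Istar) (hN1s : 0 < N1star)
    (heq1 : μt * Sstar = d + r)
    (heq2 : (d + σ) * N = σ * N1star + d * Sstar + β * Sstar * Istar)
    (heq3 : (d + σ) * N = (d + r + σ) * N1star - r * Sstar) :
    let g : ℝ → ℝ := fun x => x - 1 - Real.log x
    let ν2 : ℝ := ν1 * β * Sstar / μt
    let ν3 : ℝ := ν1 * σ / r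
    let V1 : ℝ → ℝ → ℝ → ℝ := fun S I N1 =>
      ν1 / 2 * (S - Sstar) ^ 2 + ν2 * Istar * g (I / Istar)
        + ν3 / 2 * (N1 - N1star) ^ 2
    ∀ (S I N1 : ℝ → ℝ) (t : ℝ), 0 < S t → 0 < I t → 0 < N1 t →
      HasDerivAt S ((d + σ) * N - σ * N1 t - d * S t - β * S t * I t) t →
      HasDerivAt I (μt * S t * I t - (d + r) * I t) t →
      HasDerivAt N1 ((d + σ) * N - (d + r + σ) * N1 t + r * S t) t →
      let x : ℝ := S t / Sstar
      let y : ℝ := I t / Istar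
      let z : ℝ := N1 t / N1star
      HasDerivAt (fun u => V1 (S u) (I u) (N1 u))
        (-(ν1 * d * Sstar ^ 2 * (x - 1) ^ 2)
          - ν3 * (d + r + σ) * N1star ^ 2 * (z - 1) ^ 2
          - ν1 * β * Sstar ^ 2 * Istar * y * (x - 1) ^ 2) t ∧
      (-(ν1 * d * Sstar ^ 2 * (x - 1) ^ 2)
          - ν3 * (d + r + σ) * N1star ^ 2 * (z - 1) ^ 2
          - ν1 * β * Sstar ^ 2 * Istar * y * (x - 1) ^ 2) ≤ 0 := by
  intro g ν2 ν3 V1 S I N1 t hSt hIt hN1t hS hI hN1 x y z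
  have hIsne : Istar ≠ 0 := hIs.ne'
  have hItne : I t ≠ 0 := hIt.ne'
  have hSsne : Sstar ≠ 0 := hSs.ne'
  have hN1sne : N1star ≠ 0 := hN1s.ne'
  have hrne : r ≠ 0 := hr.ne'
  have hμtne : μt ≠ 0 := hμt.ne'
  set S' := (d + σ) * N - σ * N1 t - d * S t - β * S t * I t with hS'def
  set I' := μt * S t * I t - (d + r) * I t with hI'def
  set N1' := (d + σ) * N - (d + r + σ) * N1 t + r * S t with hN1'def
  have h1 : HasDerivAt (fun u => ν1 / 2 * (S u - Sstar) ^ 2)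
      (ν1 / 2 * ((2 : ℕ) * (S t - Sstar) ^ 1 * S')) t :=
    ((hS.sub_const Sstar).pow 2).const_mul _
  have hdiv : HasDerivAt (fun u => I u / Istar) (I' / Istar) t := hI.div_const _
  have hlog : HasDerivAt (fun u => Real.log (I u / Istar))
      ((I' / Istar) / (I t / Istar)) t :=
    hdiv.log (div_ne_zero hItne hIsne)
  have h2 : HasDerivAt (fun u => ν2 * Istar * g (I u / Istar))
      (ν2 * Istar * (I' / Istar - I' / Istar / (I t / Istar))) t := by
    have : HasDerivAt (fun u => I u / Istar - 1 - Real.log (I u / Istar))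
        (I' / Istar - I' / Istar / (I t / Istar)) t :=
      (hdiv.sub_const 1).sub hlog
    exact this.const_mul _
  have h3 : HasDerivAt (fun u => ν3 / 2 * (N1 u - N1star) ^ 2)
      (ν3 / 2 * ((2 : ℕ) * (N1 t - N1star) ^ 1 * N1')) t :=
    ((hN1.sub_const N1star).pow 2).const_mul _
  have hsum := (h1.add h2).add h3
  have hkey : ν1 / 2 * ((2 : ℕ) * (S t - Sstar) ^ 1 * S')
      + ν2 * Istar * (I' / Istar - I' / Istar / (I t / Istar))
      + ν3 / 2 * ((2 : ℕ) * (N1 t - N1star) ^ 1 * N1')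
      = (-(ν1 * d * Sstar ^ 2 * (x - 1) ^ 2)
          - ν3 * (d + r + σ) * N1star ^ 2 * (z - 1) ^ 2
          - ν1 * β * Sstar ^ 2 * Istar * y * (x - 1) ^ 2) := by
    have hA : S' = σ * (N1star - N1 t) + d * (Sstar - S t)
        + β * (Sstar * Istar - S t * I t) := by
      rw [hS'def]; linear_combination heq2
    have hB : N1' = (d + r + σ) * (N1star - N1 t) + r * (S t - Sstar) := by
      rw [hN1'def]; linear_combination heq3
    have hC : I' = μt * (S t - Sstar) * I t := by
      rw [hI'def]; linear_combination I t * heq1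
    rw [hA, hB, hC]
    show ν1 / 2 * _ + ν1 * β * Sstar / μt * Istar * _ + ν1 * σ / r / 2 * _
      = -(ν1 * d * Sstar ^ 2 * (x - 1) ^ 2)
        - ν1 * σ / r * (d + r + σ) * N1star ^ 2 * (z - 1) ^ 2
        - ν1 * β * Sstar ^ 2 * Istar * y * (x - 1) ^ 2
    have hx : x = S t / Sstar := rfl
    have hy : y = I t / Istar := rfl
    have hz : z = N1 t / N1star := rfl
    rw [hx, hy, hz]
    field_simp
    ring
  rw [hkey] at hsum
  refine ⟨hsum, ?_⟩
  have hx1 : (0:ℝ) ≤ ν1 * d * Sstar ^ 2 * (x - 1) ^ 2 := by positivity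
  have hz1 : (0:ℝ) ≤ ν3 * (d + r + σ) * N1star ^ 2 * (z - 1) ^ 2 := by
    have : 0 < ν3 := by positivity
    positivity
  have hy0 : 0 < y := div_pos hIt hIs
  have hy1 : (0:ℝ) ≤ ν1 * β * Sstar ^ 2 * Istar * y * (x - 1) ^ 2 := by positivity
  linarith
end
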